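/- For the exponential variational recursion with x_0 = 0 and x_1 = x, the partial cost sums E^K(x) = Σ_{k=0}^{K} x_{k+1}(x) e^{-x_k(x)} satisfy dE^K/dx (x) = e^{-x_K(x)} · dx_{K+1}/dx (x), i.e., the derivative telescopes to the single boundary term f(x_K) x_{K+1}'. -/

import Mathlib

/-- The family of solutions of the exponential variational recursion
with x_0 = 0, x_1 = x. -/
noncomputable def expSeq (x : ℝ) : ℕ → ℝ
  | 0 => 0
  | 1 => x
  | (k + 2) => Real.exp (expSeq x (k + 1) - expSeq x k)

/-- Derivative of `expSeq · n` at `x`. -/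
noncomputable def expSeqD (x : ℝ) : ℕ → ℝ
  | 0 => 0
  | 1 => 1
  | (k + 2) => (expSeqD x (k + 1) - expSeqD x k) * Real.exp (expSeq x (k + 1) - expSeq x k)

lemma expSeq_hasDerivAt (x : ℝ) :
    ∀ n, HasDerivAt (fun t => expSeq t n) (expSeqD x n) x := by
  have key : ∀ n, HasDerivAt (fun t => expSeq t n) (expSeqD x n) x ∧
      HasDerivAt (fun t => expSeq t (n + 1)) (expSeqD x (n + 1)) x := by
    intro n
    induction n with
    | zero =>
      constructor
      · simpa [expSeq, expSeqD] using hasDerivAt_const x (0 : ℝ)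
      · simpa [expSeq, expSeqD] using hasDerivAt_id' x
    | succ k ih =>
      refine ⟨ih.2, ?_⟩
      have h := (ih.2.sub ih.1).exp
      simpa [expSeq, expSeqD, mul_comm] using h
  exact fun n => (key n).1

/-- The derivative of the partial cost sum E^K(x) = Σ_{k=0}^K x_{k+1}(x) e^{-x_k(x)}
telescopes to the single boundary term f(x_K) · dx_{K+1}/dx. -/
theorem stmt13 (x : ℝ) (K : ℕ) :
    deriv (fun t : ℝ =>
        ∑ k ∈ Finset.range (K + 1), expSeq t (k + 1) * Real.exp (-(expSeq t k))) x
      = Real.exp (-(expSeq x K)) * deriv (fun t : ℝ => expSeq t (K + 1)) x := by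
  have hterm : ∀ k : ℕ, HasDerivAt (fun t => expSeq t (k + 1) * Real.exp (-(expSeq t k)))
      (expSeqD x (k + 1) * Real.exp (-(expSeq x k))
        - expSeq x (k + 1) * expSeqD x k * Real.exp (-(expSeq x k))) x := by
    intro k
    have h1 := expSeq_hasDerivAt x (k + 1)
    have h2 := ((expSeq_hasDerivAt x k).fun_neg).exp
    have := h1.fun_mul h2
    exact this.congr_deriv (by ring)
  have hsum : HasDerivAt (fun t : ℝ =>
      ∑ k ∈ Finset.range (K + 1), expSeq t (k + 1) * Real.exp (-(expSeq t k)))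
      (∑ k ∈ Finset.range (K + 1),
        (expSeqD x (k + 1) * Real.exp (-(expSeq x k))
          - expSeq x (k + 1) * expSeqD x k * Real.exp (-(expSeq x k)))) x :=
    HasDerivAt.fun_sum fun k _ => hterm k
  rw [hsum.deriv, (expSeq_hasDerivAt x (K + 1)).deriv]
  clear hsum
  induction K with
  | zero => simp [expSeq, expSeqD]
  | succ K ih =>
    rw [Finset.sum_range_succ, ih]
    have hx : expSeq x (K + 2) * Real.exp (-(expSeq x (K + 1))) = Real.exp (-(expSeq x K)) := by
      show Real.exp (expSeq x (K + 1) - expSeq x K) * Real.exp (-(expSeq x (K + 1))) = _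
      rw [← Real.exp_add]; ring_nf
    calc Real.exp (-(expSeq x K)) * expSeqD x (K + 1)
          + (expSeqD x (K + 2) * Real.exp (-(expSeq x (K + 1)))
            - expSeq x (K + 2) * expSeqD x (K + 1) * Real.exp (-(expSeq x (K + 1))))
        = expSeqD x (K + 2) * Real.exp (-(expSeq x (K + 1)))
          + (Real.exp (-(expSeq x K))
            - expSeq x (K + 2) * Real.exp (-(expSeq x (K + 1)))) * expSeqD x (K + 1) := by ring
      _ = Real.exp (-(expSeq x (K + 1))) * expSeqD x (K + 2) := by rw [hx]; ring
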